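/- arXiv:2603.02956 — 3 statements merged into one kernel-verified Lean document; each statement's English description precedes it below -/
import Mathlib

section
/- Every simple graph G on n vertices with a vertex of degree n−1 (a universal vertex) and at least 2 edges is antimagic. -/
/-!
Let `r` be the universal vertex, `k = deg r = n - 1`, and `M` the number of edges avoiding `r`.
Label the edges avoiding `r` by `1, …, M` arbitrarily; every `v ≠ r` then carries a partial sum
`w v`. Label the edges `rv` by `M + 1, …, M + k` in nondecreasing order of `w v`, so that
`σ v = M + rk v + w v` is strictly increasing in the rank `rk v` of `v`. The hub sum beats all
others: `σ v - f(rv) ≤ (k - 1) M < (k - 1)(M + 1) ≤ σ r - f(rv)`, since `k ≥ 2` once there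
are two edges.
-/

/-- An antimagic labelling of a finite simple graph `G` with `m` edges is a bijection from the
edge set onto `{1, ..., m}` such that the vertex-sums are pairwise distinct. -/
def SimpleGraph.IsAntimagic {V : Type*} [Fintype V] [DecidableEq V]
    (G : SimpleGraph V) [DecidableRel G.Adj] : Prop :=
  ∃ f : Sym2 V → ℕ,
    Set.BijOn f ↑G.edgeFinset ↑(Finset.Icc 1 G.edgeFinset.card) ∧
    Function.Injective (fun v : V => ∑ e ∈ G.incidenceFinset v, f e)

open Finset

theorem Finset.exists_bijOn_Icc_sorted {α β : Type*} [LinearOrder β] (s : Finset α)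
    (w : α → β) :
    ∃ rk : α → ℕ, Set.BijOn rk s (Icc 1 #s) ∧ ∀ a ∈ s, ∀ b ∈ s, rk a < rk b → w a ≤ w b := by
  classical
  let e : Fin #s ≃ s := s.equivFin.symm
  let enum : Fin #s ≃ s := (Tuple.sort fun i ↦ w (e i)).trans e
  have hmono : Monotone fun i ↦ w (enum i) := Tuple.monotone_sort fun i ↦ w (e i)
  let rk a := if h : a ∈ s then (enum.symm ⟨a, h⟩ : ℕ) + 1 else 0
  have hrk (a : s) : rk a = enum.symm a + 1 := dif_pos a.2
  refine ⟨rk, ⟨fun a ha ↦ ?_, fun a ha b hb hab ↦ ?_, fun i hi ↦ ?_⟩, fun a ha b hb hab ↦ ?_⟩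
  · simp [hrk ⟨a, ha⟩]
  · rw [hrk ⟨a, ha⟩, hrk ⟨b, hb⟩, add_left_inj, Fin.val_inj, enum.symm.apply_eq_iff_eq] at hab
    exact congrArg Subtype.val hab
  · simp only [coe_Icc, Set.mem_Icc] at hi
    refine ⟨enum ⟨i - 1, by omega⟩, (enum _).2, ?_⟩
    rw [hrk, Equiv.symm_apply_apply, Fin.val_mk]
    omega
  · rw [hrk ⟨a, ha⟩, hrk ⟨b, hb⟩, add_lt_add_iff_right, Fin.val_fin_lt] at hab
    simpa using hmono hab.le

namespace SimpleGraph

variable {V : Type*} {G : SimpleGraph V}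

theorem exists_adj_eq_mk {r : V} {e : Sym2 V} (he : e ∈ G.edgeSet) (hr : r ∈ e) :
    ∃ v, G.Adj r v ∧ e = s(r, v) := by
  obtain ⟨v, rfl⟩ := Sym2.mem_iff_exists.mp hr
  exact ⟨v, he, rfl⟩

theorem IsUniversal.two_le_degree [Fintype V] [DecidableRel G.Adj] {r : V}
    (hr : G.IsUniversal r) (hm : 2 ≤ #G.edgeFinset) : 2 ≤ G.degree r := by
  have hcard := G.card_edgeFinset_le_card_choose_two
  rw [(G.degree_eq_card_sub_one r).mpr hr]
  by_contra! h
  have := (Nat.choose_le_choose 2 (by omega : Fintype.card V ≤ 2)).trans_eq (Nat.choose_self 2)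
  omega

section Incidence

variable [Fintype V] [DecidableEq V] [DecidableRel G.Adj]

theorem notMem_of_mem_erase_incidenceFinset {r v : V} {e : Sym2 V} (hrv : r ≠ v)
    (he : e ∈ (G.incidenceFinset v).erase s(r, v)) : r ∉ e := by
  rw [mem_erase, mem_incidenceFinset] at he
  exact fun hr ↦ he.1 ((Sym2.mem_and_mem_iff hrv).mp ⟨hr, he.2.2⟩)

theorem sum_incidenceFinset_lt_of_adj {f : Sym2 V → ℕ} {r v : V} {M : ℕ} (hrv : G.Adj r v)
    (hdeg : G.degree v ≤ G.degree r) (h2 : 2 ≤ G.degree r)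
    (hlow : ∀ e ∈ G.edgeFinset, r ∉ e → f e ≤ M) (hhigh : ∀ e ∈ G.edgeFinset, r ∈ e → M < f e) :
    ∑ e ∈ G.incidenceFinset v, f e < ∑ e ∈ G.incidenceFinset r, f e := by
  have hv : s(r, v) ∈ G.incidenceFinset v := by
    rw [mem_incidenceFinset, Sym2.eq_swap, mem_incidenceSet]
    exact hrv.symm
  have hr : s(r, v) ∈ G.incidenceFinset r := by simpa [mem_incidenceSet] using hrv
  rw [← add_sum_erase _ _ hv, ← add_sum_erase _ _ hr, add_lt_add_iff_left]
  calc ∑ e ∈ (G.incidenceFinset v).erase s(r, v), f e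
      ≤ #((G.incidenceFinset v).erase s(r, v)) • M := by
        refine sum_le_card_nsmul _ _ _ fun e he ↦ hlow e ?_ ?_
        · exact G.incidenceFinset_subset v (mem_of_mem_erase he)
        · exact notMem_of_mem_erase_incidenceFinset hrv.ne he
    _ ≤ (G.degree r - 1) * M := by
        rw [card_erase_of_mem hv, card_incidenceFinset_eq_degree, smul_eq_mul]
        gcongr
    _ < (G.degree r - 1) * (M + 1) := by
        gcongr
        · omega
        · omega
    _ = #((G.incidenceFinset r).erase s(r, v)) • (M + 1) := by
        rw [card_erase_of_mem hr, card_incidenceFinset_eq_degree, smul_eq_mul]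
    _ ≤ ∑ e ∈ (G.incidenceFinset r).erase s(r, v), f e := by
        refine card_nsmul_le_sum _ _ _ fun e he ↦ hhigh e ?_ ?_
        · exact G.incidenceFinset_subset r (mem_of_mem_erase he)
        · exact ((G.mem_incidenceFinset r e).mp (mem_of_mem_erase he)).2

end Incidence

section HubLabelling

variable [DecidableEq V]

def hubLabelling (r : V) (M : ℕ) (rk : V → ℕ) (g : Sym2 V → ℕ) (e : Sym2 V) : ℕ :=
  if h : r ∈ e then M + rk (Sym2.Mem.other' h) else g e

variable {r : V} {M : ℕ} {rk : V → ℕ} {g : Sym2 V → ℕ}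

@[simp]
theorem hubLabelling_mk (v : V) : hubLabelling r M rk g s(r, v) = M + rk v := by
  rw [hubLabelling, dif_pos (Sym2.mem_mk_left r v),
    Sym2.congr_right.mp (Sym2.other_spec' (Sym2.mem_mk_left r v))]

theorem hubLabelling_of_notMem {e : Sym2 V} (he : r ∉ e) : hubLabelling r M rk g e = g e :=
  dif_neg he

variable [Fintype V] [DecidableRel G.Adj]

theorem hubLabelling_le (hg : Set.MapsTo g (G.edgeFinset.filter (r ∉ ·)) (Icc 1 M))
    {e : Sym2 V} (he : e ∈ G.edgeFinset) (hre : r ∉ e) : hubLabelling r M rk g e ≤ M := by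
  rw [hubLabelling_of_notMem hre]
  exact (mem_Icc.mp (hg (mem_filter.mpr ⟨he, hre⟩))).2

theorem lt_hubLabelling (hrk : Set.MapsTo rk (G.neighborFinset r) (Icc 1 (G.degree r)))
    {e : Sym2 V} (he : e ∈ G.edgeFinset) (hre : r ∈ e) : M < hubLabelling r M rk g e := by
  obtain ⟨v, hrv, rfl⟩ := exists_adj_eq_mk (mem_edgeFinset.mp he) hre
  have := mem_Icc.mp (hrk ((G.mem_neighborFinset r v).mpr hrv))
  rw [hubLabelling_mk]
  omega

theorem bijOn_hubLabelling
    (hg : Set.BijOn g (G.edgeFinset.filter (r ∉ ·)) (Icc 1 #(G.edgeFinset.filter (r ∉ ·))))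
    (hrk : Set.BijOn rk (G.neighborFinset r) (Icc 1 (G.degree r))) :
    Set.BijOn (hubLabelling r #(G.edgeFinset.filter (r ∉ ·)) rk g) G.edgeFinset
      (Icc 1 #G.edgeFinset) := by
  set E' := G.edgeFinset.filter (r ∉ ·)
  have hcard : #G.edgeFinset = #E' + G.degree r := by
    rw [← card_incidenceFinset_eq_degree, incidenceFinset_eq_filter, add_comm,
      card_filter_add_card_filter_not]
  have hmaps : Set.MapsTo (hubLabelling r #E' rk g) G.edgeFinset (Icc 1 #G.edgeFinset) := by
    intro e he
    by_cases hre : r ∈ e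
    · obtain ⟨v, hrv, rfl⟩ := exists_adj_eq_mk (mem_edgeFinset.mp he) hre
      have := mem_Icc.mp (hrk.mapsTo ((G.mem_neighborFinset r v).mpr hrv))
      simp only [coe_Icc, Set.mem_Icc, hubLabelling_mk]
      omega
    · have := mem_Icc.mp (hg.mapsTo (mem_filter.mpr ⟨he, hre⟩))
      simp only [coe_Icc, Set.mem_Icc, hubLabelling_of_notMem hre]
      omega
  have hinj : Set.InjOn (hubLabelling r #E' rk g) G.edgeFinset := by
    intro e he e' he' h
    by_cases hre : r ∈ e <;> by_cases hre' : r ∈ e'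
    · obtain ⟨v, hrv, rfl⟩ := exists_adj_eq_mk (mem_edgeFinset.mp he) hre
      obtain ⟨v', hrv', rfl⟩ := exists_adj_eq_mk (mem_edgeFinset.mp he') hre'
      rw [hubLabelling_mk, hubLabelling_mk, add_right_inj] at h
      rw [hrk.injOn (by simpa using hrv) (by simpa using hrv') h]
    · exact absurd h ((hubLabelling_le hg.mapsTo he' hre').trans_lt
        (lt_hubLabelling hrk.mapsTo he hre)).ne'
    · exact absurd h ((hubLabelling_le hg.mapsTo he hre).trans_lt
        (lt_hubLabelling hrk.mapsTo he' hre')).ne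
    · rw [hubLabelling_of_notMem hre, hubLabelling_of_notMem hre'] at h
      exact hg.injOn (mem_filter.mpr ⟨he, hre⟩) (mem_filter.mpr ⟨he', hre'⟩) h
  exact ⟨hmaps, hinj, surjOn_of_injOn_of_card_le _ hmaps hinj (by simp)⟩

theorem sum_incidenceFinset_hubLabelling {v : V} (hrv : G.Adj r v) :
    ∑ e ∈ G.incidenceFinset v, hubLabelling r M rk g e =
      M + rk v + ∑ e ∈ (G.incidenceFinset v).erase s(r, v), g e := by
  have hv : s(r, v) ∈ G.incidenceFinset v := by
    rw [mem_incidenceFinset, Sym2.eq_swap, mem_incidenceSet]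
    exact hrv.symm
  rw [← add_sum_erase _ _ hv, hubLabelling_mk]
  congr 1
  exact sum_congr rfl fun e he ↦
    hubLabelling_of_notMem (notMem_of_mem_erase_incidenceFinset hrv.ne he)

theorem IsUniversal.sum_incidenceFinset_hubLabelling_lt (hr : G.IsUniversal r)
    (hdeg : 2 ≤ G.degree r) (hg : Set.MapsTo g (G.edgeFinset.filter (r ∉ ·)) (Icc 1 M))
    (hrk : Set.MapsTo rk (G.neighborFinset r) (Icc 1 (G.degree r))) {v : V} (hv : r ≠ v) :
    ∑ e ∈ G.incidenceFinset v, hubLabelling r M rk g e <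
      ∑ e ∈ G.incidenceFinset r, hubLabelling r M rk g e := by
  refine sum_incidenceFinset_lt_of_adj (hr hv) ?_ hdeg
    (fun _ he hre ↦ hubLabelling_le hg he hre) (fun _ he hre ↦ lt_hubLabelling hrk he hre)
  rw [(G.degree_eq_card_sub_one r).mpr hr]
  exact Nat.le_sub_one_of_lt (G.degree_lt_card_verts v)

end HubLabelling

end SimpleGraph

open SimpleGraph in
/-- Every simple graph with a universal vertex (a vertex of degree `n - 1`) and at least
two edges is antimagic. -/
theorem antimagic_of_universal_vertex {V : Type*} [Fintype V] [DecidableEq V]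
    (G : SimpleGraph V) [DecidableRel G.Adj] (r : V)
    (hr : G.degree r = Fintype.card V - 1) (hm : 2 ≤ G.edgeFinset.card) :
    G.IsAntimagic := by
  have huniv : G.IsUniversal r := (G.degree_eq_card_sub_one r).mp hr
  have hnbr {v : V} (hv : r ≠ v) : v ∈ G.neighborFinset r := by simpa using huniv hv
  set E' := G.edgeFinset.filter (r ∉ ·)
  obtain ⟨g, hg, -⟩ := E'.exists_bijOn_Icc_sorted fun _ ↦ 0
  obtain ⟨rk, hrk, hsorted⟩ := (G.neighborFinset r).exists_bijOn_Icc_sorted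
    fun v ↦ ∑ e ∈ (G.incidenceFinset v).erase s(r, v), g e
  rw [card_neighborFinset_eq_degree] at hrk
  set f := hubLabelling r #E' rk g
  have hhub {v : V} (hv : r ≠ v) := huniv.sum_incidenceFinset_hubLabelling_lt
    (huniv.two_le_degree hm) hg.mapsTo hrk.mapsTo hv
  have hleaf {u v : V} (hu : r ≠ u) (hv : r ≠ v) (huv : rk u < rk v) :
      ∑ e ∈ G.incidenceFinset u, f e < ∑ e ∈ G.incidenceFinset v, f e := by
    rw [sum_incidenceFinset_hubLabelling (huniv hu),
      sum_incidenceFinset_hubLabelling (huniv hv)]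
    have := hsorted u (hnbr hu) v (hnbr hv) huv
    omega
  refine ⟨f, bijOn_hubLabelling hg hrk, fun u v huv ↦ ?_⟩
  rcases eq_or_ne r u with rfl | hu <;> rcases eq_or_ne r v with rfl | hv
  · rfl
  · exact absurd huv (hhub hv).ne'
  · exact absurd huv (hhub hu).ne
  · rcases lt_trichotomy (rk u) (rk v) with h | h | h
    · exact absurd huv (hleaf hu hv h).ne
    · exact hrk.injOn (hnbr hu) (hnbr hv) h
    · exact absurd huv (hleaf hv hu h).ne'
end

section
/- Let G be a graph with a proper edge colouring using k colour classes C_1,...,C_k, and suppose |E(G)| ≥ 3k. Then there exists a proper edge colouring of G with k colour classes each containing at least 3 edges. -/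
/-!
Two colour classes `M`, `N` with `#M < #N` can be recoloured inside `M ∪ N` to sizes `#M + 1`
and `#N - 1`. Counting endpoints gives an `N`-edge `vw` with `v` missed by `M`. If `w` is also
missed by `M`, move `vw` to `M`. Otherwise let `wu` be the `M`-edge at `w`: remove `vw` and `wu`,
rebalance the rest by induction, and put the two edges back on opposite sides; `u` now lies on at
most one remaining edge, so one side is free at `u` and takes `wu`, the other takes `vw`. (This is
the swap along an alternating path, performed one pair of edges at a time.)

If some class has fewer than three edges, then since `#E ≥ 3k` another has more than three, and
rebalancing the two lowers the total deficit `∑ i, (3 - #Cᵢ)`.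
-/

open Finset

namespace EdgeColouring

variable {V : Type*}

def IsMatching (S : Finset (Sym2 V)) : Prop :=
  ∀ e₁ ∈ S, ∀ e₂ ∈ S, e₁ ≠ e₂ → ∀ x, x ∈ e₁ → x ∉ e₂

theorem IsMatching.mono {S T : Finset (Sym2 V)} (hT : IsMatching T) (h : S ⊆ T) :
    IsMatching S :=
  fun e₁ h₁ e₂ h₂ => hT e₁ (h h₁) e₂ (h h₂)

theorem IsMatching.eq_of_mem {S : Finset (Sym2 V)} (hS : IsMatching S) {e₁ e₂ : Sym2 V} {x : V}
    (h₁ : e₁ ∈ S) (h₂ : e₂ ∈ S) (hx₁ : x ∈ e₁) (hx₂ : x ∈ e₂) : e₁ = e₂ :=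
  by_contra fun hne => hS e₁ h₁ e₂ h₂ hne x hx₁ hx₂

variable [DecidableEq V]

theorem IsMatching.forall_notMem_erase {S : Finset (Sym2 V)} (hS : IsMatching S) {e : Sym2 V}
    {x : V} (he : e ∈ S) (hx : x ∈ e) : ∀ g ∈ S.erase e, x ∉ g :=
  fun g hg => hS e he g (mem_of_mem_erase hg) (ne_of_mem_erase hg).symm x hx

theorem IsMatching.insert {S : Finset (Sym2 V)} {e : Sym2 V} (hS : IsMatching S)
    (he : ∀ x ∈ e, ∀ f ∈ S, x ∉ f) : IsMatching (insert e S) := by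
  intro e₁ h₁ e₂ h₂ hne x hx₁ hx₂
  rcases mem_insert.1 h₁ with rfl | hS₁ <;> rcases mem_insert.1 h₂ with rfl | hS₂
  · exact hne rfl
  · exact he x hx₁ e₂ hS₂ hx₂
  · exact he x hx₂ e₁ hS₁ hx₁
  · exact hS e₁ hS₁ e₂ hS₂ hne x hx₁ hx₂

/-- Count endpoints: `N` covers `2 * #N` vertices, `M` at most `2 * #M`. -/
theorem IsMatching.exists_mem_forall_notMem {M N : Finset (Sym2 V)} (hN : IsMatching N)
    (hloop : ∀ e ∈ N, ¬ e.IsDiag) (hlt : #M < #N) : ∃ v w, s(v, w) ∈ N ∧ ∀ f ∈ M, v ∉ f := by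
  have hcardN : #(N.biUnion Sym2.toFinset) = 2 * #N := by
    rw [card_biUnion, sum_congr rfl fun e he => Sym2.card_toFinset_of_not_isDiag e (hloop e he),
      sum_const, smul_eq_mul, mul_comm]
    intro e₁ h₁ e₂ h₂ hne
    exact disjoint_left.2 fun x hx₁ hx₂ =>
      hN e₁ h₁ e₂ h₂ hne x (Sym2.mem_toFinset.1 hx₁) (Sym2.mem_toFinset.1 hx₂)
  have hcardM : #(M.biUnion Sym2.toFinset) ≤ 2 * #M := by
    refine card_biUnion_le.trans ((sum_le_card_nsmul _ _ 2 fun e _ => ?_).trans_eq (mul_comm _ _))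
    rw [Sym2.card_toFinset]
    split_ifs <;> omega
  obtain ⟨v, hvN, hvM⟩ := exists_mem_notMem_of_card_lt_card (s := M.biUnion Sym2.toFinset)
    (t := N.biUnion Sym2.toFinset) (by omega)
  obtain ⟨e, he, hve⟩ := mem_biUnion.1 hvN
  obtain ⟨w, rfl⟩ := Sym2.mem_iff_exists.1 (Sym2.mem_toFinset.1 hve)
  exact ⟨v, w, he, fun f hf hvf => hvM (mem_biUnion.2 ⟨f, hf, Sym2.mem_toFinset.2 hvf⟩)⟩

structure IsMatchingSplit (E A B : Finset (Sym2 V)) : Prop where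
  union_eq : A ∪ B = E
  disjoint : Disjoint A B
  left : IsMatching A
  right : IsMatching B

namespace IsMatchingSplit

variable {E A B : Finset (Sym2 V)} {e : Sym2 V}

theorem symm (h : IsMatchingSplit E A B) : IsMatchingSplit E B A :=
  ⟨union_comm B A ▸ h.union_eq, h.disjoint.symm, h.right, h.left⟩

theorem left_subset (h : IsMatchingSplit E A B) : A ⊆ E :=
  h.union_eq ▸ subset_union_left

theorem right_subset (h : IsMatchingSplit E A B) : B ⊆ E :=
  h.symm.left_subset

theorem insert_left (h : IsMatchingSplit E A B) (heE : e ∉ E) (he : ∀ x ∈ e, ∀ f ∈ A, x ∉ f) :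
    IsMatchingSplit (insert e E) (insert e A) B := by
  refine ⟨?_, ?_, h.left.insert he, h.right⟩
  · rw [insert_union, h.union_eq]
  · exact disjoint_insert_left.2 ⟨fun heB => heE (h.right_subset heB), h.disjoint⟩

theorem insert_right (h : IsMatchingSplit E A B) (heE : e ∉ E) (he : ∀ x ∈ e, ∀ f ∈ B, x ∉ f) :
    IsMatchingSplit (insert e E) A (insert e B) :=
  (h.symm.insert_left heE he).symm

theorem erase_left (h : IsMatchingSplit E A B) (he : e ∈ A) :
    IsMatchingSplit (E.erase e) (A.erase e) B := by
  refine ⟨?_, h.disjoint.mono_left (erase_subset _ _), h.left.mono (erase_subset _ _), h.right⟩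
  rw [← h.union_eq, erase_union_distrib, erase_eq_of_notMem (disjoint_left.1 h.disjoint he)]

theorem erase_right (h : IsMatchingSplit E A B) (he : e ∈ B) :
    IsMatchingSplit (E.erase e) A (B.erase e) :=
  (h.symm.erase_left he).symm

theorem forall_notMem_or_forall_notMem (h : IsMatchingSplit E A B) {u : V}
    (hu : ∀ g ∈ E, ∀ g' ∈ E, u ∈ g → u ∈ g' → g = g') :
    (∀ g ∈ A, u ∉ g) ∨ (∀ g ∈ B, u ∉ g) := by
  by_contra! ⟨⟨g, hgA, hug⟩, ⟨g', hgB, hug'⟩⟩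
  have := hu g (h.left_subset hgA) g' (h.right_subset hgB) hug hug'
  exact disjoint_left.1 h.disjoint hgA (this ▸ hgB)

theorem exists_insert_pair (h : IsMatchingSplit E A B) {v w u : V} (hvu : v ≠ u)
    (hv : ∀ g ∈ E, v ∉ g) (hw : ∀ g ∈ E, w ∉ g)
    (hu : ∀ g ∈ E, ∀ g' ∈ E, u ∈ g → u ∈ g' → g = g') :
    ∃ A' B', IsMatchingSplit (insert s(v, w) (insert s(w, u) E)) A' B' ∧
      #A' = #A + 1 ∧ #B' = #B + 1 := by
  have hwu : s(w, u) ∉ E := fun hE => hw _ hE (Sym2.mem_mk_left w u)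
  have hvwE : s(v, w) ∉ E := fun hE => hv _ hE (Sym2.mem_mk_left v w)
  have hvw : s(v, w) ∉ insert s(w, u) E := by
    rw [mem_insert, Sym2.eq_iff, not_or]
    refine ⟨?_, hvwE⟩
    rintro (⟨rfl, rfl⟩ | ⟨rfl, -⟩) <;> exact hvu rfl
  have hvw_avoids : ∀ C ⊆ E, ∀ x ∈ s(v, w), ∀ g ∈ C, x ∉ g := by
    intro C hC x hx g hg
    rcases Sym2.mem_iff.1 hx with rfl | rfl
    exacts [hv g (hC hg), hw g (hC hg)]
  have hwu_avoids : ∀ C ⊆ E, (∀ g ∈ C, u ∉ g) → ∀ x ∈ s(w, u), ∀ g ∈ C, x ∉ g := by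
    intro C hC huC x hx g hg
    rcases Sym2.mem_iff.1 hx with rfl | rfl
    exacts [hw g (hC hg), huC g hg]
  have hA : ∀ e ∉ E, e ∉ A := fun e heE heA => heE (h.left_subset heA)
  have hB : ∀ e ∉ E, e ∉ B := fun e heE heB => heE (h.right_subset heB)
  rcases h.forall_notMem_or_forall_notMem hu with huA | huB
  · exact ⟨insert s(w, u) A, insert s(v, w) B,
      (h.insert_left hwu (hwu_avoids A h.left_subset huA)).insert_right hvw
        (hvw_avoids B h.right_subset),
      card_insert_of_notMem (hA _ hwu), card_insert_of_notMem (hB _ hvwE)⟩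
  · exact ⟨insert s(v, w) A, insert s(w, u) B,
      (h.insert_right hwu (hwu_avoids B h.right_subset huB)).insert_left hvw
        (hvw_avoids A h.left_subset),
      card_insert_of_notMem (hA _ hvwE), card_insert_of_notMem (hB _ hwu)⟩

theorem exists_card_eq_succ {M N : Finset (Sym2 V)} (h : IsMatchingSplit E M N)
    (hloop : ∀ e ∈ N, ¬ e.IsDiag) (hlt : #M < #N) :
    ∃ A B, IsMatchingSplit E A B ∧ #A = #M + 1 ∧ #B + 1 = #N := by
  induction hn : #N using Nat.strong_induction_on generalizing E M N with
  | _ n ih =>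
  subst hn
  obtain ⟨v, w, hvw, hvM⟩ := h.right.exists_mem_forall_notMem hloop hlt
  have hvwM : s(v, w) ∉ M := fun hM => hvM _ hM (Sym2.mem_mk_left v w)
  by_cases hwM : ∃ f ∈ M, w ∈ f
  · obtain ⟨f, hfM, hwf⟩ := hwM
    obtain ⟨u, rfl⟩ := Sym2.mem_iff_exists.1 hwf
    have hvu : v ≠ u := fun hvu => hvM _ hfM (hvu ▸ Sym2.mem_mk_right w u)
    have h₀ := (h.erase_right hvw).erase_left hfM
    have hcardM := card_erase_add_one hfM
    have hcardN := card_erase_add_one hvw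
    obtain ⟨A, B, hAB, hA, hB⟩ := ih _ (card_erase_lt_of_mem hvw) h₀
      (fun e he => hloop e (mem_of_mem_erase he)) (by omega) rfl
    have hE₀ : ∀ g ∈ (E.erase s(v, w)).erase s(w, u), g ∈ M.erase s(w, u) ∨ g ∈ N.erase s(v, w) :=
      fun g hg => mem_union.1 (h₀.union_eq ▸ hg)
    obtain ⟨A', B', hAB', hA', hB'⟩ := hAB.exists_insert_pair hvu
      (fun g hg => (hE₀ g hg).elim (fun hgM => hvM g (mem_of_mem_erase hgM))
        (h.right.forall_notMem_erase hvw (Sym2.mem_mk_left v w) g))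
      (fun g hg => (hE₀ g hg).elim (h.left.forall_notMem_erase hfM (Sym2.mem_mk_left w u) g)
        (h.right.forall_notMem_erase hvw (Sym2.mem_mk_right v w) g))
      (fun g hg g' hg' hug hug' => by
        have huM := h.left.forall_notMem_erase hfM (Sym2.mem_mk_right w u)
        have hgN := (hE₀ g hg).resolve_left fun hgM => huM g hgM hug
        have hgN' := (hE₀ g' hg').resolve_left fun hgM => huM g' hgM hug'
        exact h.right.mono (erase_subset _ _) |>.eq_of_mem hgN hgN' hug hug')
    have hwuE : s(w, u) ∈ E.erase s(v, w) :=
      mem_erase.2 ⟨fun he => hvwM (he ▸ hfM), h.left_subset hfM⟩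
    rw [insert_erase hwuE, insert_erase (h.right_subset hvw)] at hAB'
    exact ⟨A', B', hAB', by omega, by omega⟩
  · push Not at hwM
    refine ⟨insert s(v, w) M, N.erase s(v, w), ?_, card_insert_of_notMem hvwM,
      card_erase_add_one hvw⟩
    rw [← insert_erase (h.right_subset hvw)]
    refine (h.erase_right hvw).insert_left (notMem_erase _ _) fun x hx => ?_
    rcases Sym2.mem_iff.1 hx with rfl | rfl
    exacts [hvM, hwM]

end IsMatchingSplit

section Partition

variable {ι : Type*} [Fintype ι]

structure IsMatchingPartition (E : Finset (Sym2 V)) (C : ι → Finset (Sym2 V)) : Prop where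
  biUnion_eq : univ.biUnion C = E
  disjoint : ∀ i j, i ≠ j → Disjoint (C i) (C j)
  isMatching : ∀ i, IsMatching (C i)

-- Truncated subtraction: classes with at least `m` edges contribute `0`.
def deficit (m : ℕ) (C : ι → Finset (Sym2 V)) : ℕ :=
  ∑ i, (m - #(C i))

namespace IsMatchingPartition

variable {E : Finset (Sym2 V)} {C : ι → Finset (Sym2 V)}

theorem subset (hC : IsMatchingPartition E C) (i : ι) : C i ⊆ E :=
  hC.biUnion_eq ▸ subset_biUnion_of_mem C (mem_univ i)

theorem sum_card (hC : IsMatchingPartition E C) : ∑ i, #(C i) = #E := by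
  rw [← hC.biUnion_eq, card_biUnion fun i _ j _ hij => hC.disjoint i j hij]

theorem isMatchingSplit (hC : IsMatchingPartition E C) {i j : ι} (hij : i ≠ j) :
    IsMatchingSplit (C i ∪ C j) (C i) (C j) :=
  ⟨rfl, hC.disjoint i j hij, hC.isMatching i, hC.isMatching j⟩

variable [DecidableEq ι]

theorem update (hC : IsMatchingPartition E C) {i j : ι} (hij : i ≠ j) {A B : Finset (Sym2 V)}
    (hAB : IsMatchingSplit (C i ∪ C j) A B) :
    IsMatchingPartition E (Function.update (Function.update C i A) j B) := by
  have hmem : ∀ e, e ∈ A ∨ e ∈ B ↔ e ∈ C i ∨ e ∈ C j := fun e => by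
    rw [← mem_union, ← mem_union, hAB.union_eq]
  refine ⟨?_, ?_, ?_⟩
  · ext e
    simp only [← hC.biUnion_eq, mem_biUnion, mem_univ, true_and, Function.update_apply]
    grind
  · intro l l' hll'
    have hAB' := disjoint_left.1 hAB.disjoint
    have hC' : ∀ m m', m ≠ m' → ∀ ⦃e⦄, e ∈ C m → e ∉ C m' := fun m m' h =>
      disjoint_left.1 (hC.disjoint m m' h)
    simp only [Function.update_apply, disjoint_left]
    grind
  · intro l
    simp only [Function.update_apply]
    split_ifs
    exacts [hAB.right, hAB.left, hC.isMatching l]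

theorem exists_deficit_lt (hC : IsMatchingPartition E C) (hloop : ∀ e ∈ E, ¬ e.IsDiag)
    {m : ℕ} (hE : m * Fintype.card ι ≤ #E) {i : ι} (hi : #(C i) < m) :
    ∃ C' : ι → Finset (Sym2 V), IsMatchingPartition E C' ∧ deficit m C' < deficit m C := by
  obtain ⟨j, hj⟩ : ∃ j, m < #(C j) := by
    by_contra! hsmall
    have : ∑ l, #(C l) < ∑ _l : ι, m := sum_lt_sum (fun l _ => hsmall l) ⟨i, mem_univ i, hi⟩
    rw [hC.sum_card, sum_const, card_univ, smul_eq_mul, mul_comm] at this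
    omega
  have hij : i ≠ j := by rintro rfl; omega
  obtain ⟨A, B, hAB, hA, hB⟩ := (hC.isMatchingSplit hij).exists_card_eq_succ
    (fun e he => hloop e (hC.subset j he)) (by omega)
  refine ⟨_, hC.update hij hAB, sum_lt_sum (fun l _ => ?_) ⟨i, mem_univ i, ?_⟩⟩
  · simp only [Function.update_apply]
    split_ifs <;> subst_vars <;> omega
  · simp only [Function.update_apply, hij, if_false, if_true]
    omega

theorem exists_le_card (hC : IsMatchingPartition E C) (hloop : ∀ e ∈ E, ¬ e.IsDiag) {m : ℕ}
    (hE : m * Fintype.card ι ≤ #E) :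
    ∃ C' : ι → Finset (Sym2 V), IsMatchingPartition E C' ∧ ∀ i, m ≤ #(C' i) := by
  induction hd : deficit m C using Nat.strong_induction_on generalizing C with
  | _ d ih =>
  by_cases hC_large : ∀ i, m ≤ #(C i)
  · exact ⟨C, hC, hC_large⟩
  push Not at hC_large
  obtain ⟨i, hi⟩ := hC_large
  obtain ⟨C', hC', hlt⟩ := hC.exists_deficit_lt hloop hE hi
  exact ih _ (hd ▸ hlt) hC' rfl

end IsMatchingPartition

end Partition

end EdgeColouring

theorem rebalance_colour_classes_general {V : Type*} [Fintype V] [DecidableEq V]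
    (G : SimpleGraph V) [DecidableRel G.Adj] (k : ℕ) (C : Fin k → Finset (Sym2 V))
    (hdisj : ∀ i j, i ≠ j → Disjoint (C i) (C j))
    (hcover : Finset.univ.biUnion C = G.edgeFinset)
    (hmatch : ∀ i, ∀ e₁ ∈ C i, ∀ e₂ ∈ C i, e₁ ≠ e₂ → ∀ x, x ∈ e₁ → x ∉ e₂)
    (hm : 3 * k ≤ G.edgeFinset.card) :
    ∃ C' : Fin k → Finset (Sym2 V),
      (∀ i, C' i ⊆ G.edgeFinset) ∧
      (∀ i j, i ≠ j → Disjoint (C' i) (C' j)) ∧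
      (Finset.univ.biUnion C' = G.edgeFinset) ∧
      (∀ i, ∀ e₁ ∈ C' i, ∀ e₂ ∈ C' i, e₁ ≠ e₂ → ∀ x, x ∈ e₁ → x ∉ e₂) ∧
      (∀ i, 3 ≤ (C' i).card) := by
  have hC : EdgeColouring.IsMatchingPartition G.edgeFinset C := ⟨hcover, hdisj, hmatch⟩
  obtain ⟨C', hC', hlarge⟩ := hC.exists_le_card
    (fun e he => G.not_isDiag_of_mem_edgeSet (SimpleGraph.mem_edgeFinset.1 he))
    (m := 3) (by simpa using hm)
  exact ⟨C', hC'.subset, hC'.disjoint, hC'.biUnion_eq, hC'.isMatching, hlarge⟩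

/-- If a graph `G` has a proper edge colouring with `k` colour classes (a partition of the edge
set into `k` matchings) and at least `3k` edges, then `G` has a proper edge colouring with `k`
colour classes each containing at least `3` edges. -/
theorem rebalance_colour_classes {V : Type*} [Fintype V] [DecidableEq V]
    (G : SimpleGraph V) [DecidableRel G.Adj] (k : ℕ) (C : Fin k → Finset (Sym2 V))
    (hsub : ∀ i, C i ⊆ G.edgeFinset)
    (hdisj : ∀ i j, i ≠ j → Disjoint (C i) (C j))
    (hcover : Finset.univ.biUnion C = G.edgeFinset)
    (hmatch : ∀ i, ∀ e₁ ∈ C i, ∀ e₂ ∈ C i, e₁ ≠ e₂ → ∀ x, x ∈ e₁ → x ∉ e₂)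
    (hm : 3 * k ≤ G.edgeFinset.card) :
    ∃ C' : Fin k → Finset (Sym2 V),
      (∀ i, C' i ⊆ G.edgeFinset) ∧
      (∀ i j, i ≠ j → Disjoint (C' i) (C' j)) ∧
      (Finset.univ.biUnion C' = G.edgeFinset) ∧
      (∀ i, ∀ e₁ ∈ C' i, ∀ e₂ ∈ C' i, e₁ ≠ e₂ → ∀ x, x ∈ e₁ → x ∉ e₂) ∧
      (∀ i, 3 ≤ (C' i).card) :=
  rebalance_colour_classes_general G k C hdisj hcover hmatch hm
end

section
/- If G is a graph on n vertices whose vertex set decomposes as a connected component on 3 vertices (either K_3 or the path P_3) together with a component containing a universal-in-component vertex r of degree n−4, and m ≥ 7n, then G is antimagic. -/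
/-!
The small component takes the labels `1, …, k` (`k = 2` for `P₃`, `k = 3` for `K₃`), so its
vertex sums are at most `5` and pairwise distinct: they are `x, x + y, y` on a path and the three
pairwise sums of distinct labels on a triangle. The other edges avoiding `r` take the labels up
to `L = m - deg r`, and the star at `r` takes the top labels `L + 1, …, m`. Write the sum at a
neighbour `w` of `r` as `K w + g w`, where `g w` is the label of `rw`; assigning the star labels
in increasing order of `K` makes these sums pairwise distinct. Each of them exceeds `L`, and is
smaller than the sum at `r`, since `K w` is a sum of at most `deg r - 1` labels `≤ L` while the
other `deg r - 1` star labels all exceed `L`. The bound `m ≥ 7n` forces `n ≥ 15` (as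
`m ≤ n(n-1)/2`), which gives `deg r ≥ 2` and `L ≥ 5`.
-/

open Finset

theorem Finset.exists_bijOn_Icc_of_lt_imp_lt {α β : Type*} [DecidableEq α] [LinearOrder β]
    (K : α → β) (s : Finset α) (N : ℕ) :
    ∃ g : α → ℕ, Set.BijOn g s (Set.Icc (N + 1) (N + #s)) ∧
      ∀ x ∈ s, ∀ y ∈ s, K x < K y → g x < g y := by
  induction s using Finset.induction_on_max_value K with
  | empty => exact ⟨0, by simp, by simp⟩
  | insert a s ha hmax ih =>
    obtain ⟨g, hbij, hmono⟩ := ih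
    set g' := Function.update g a (N + #s + 1)
    have hg' : ∀ x ∈ s, g' x = g x := fun x hx =>
      Function.update_of_ne (ne_of_mem_of_not_mem hx ha) _ _
    have hbij' : Set.BijOn g' s (Set.Icc (N + 1) (N + #s)) :=
      hbij.congr fun x hx => (hg' x hx).symm
    have hga : g' a = N + #s + 1 := Function.update_self ..
    refine ⟨g', ?_, ?_⟩
    · rw [coe_insert, card_insert_of_notMem ha, ← add_assoc,
        ← Set.insert_Icc_right_eq_Icc_add_one (by omega), ← hga]
      exact hbij'.insert (by simp [hga])
    · intro x hx y hy hxy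
      rcases mem_insert.1 hx with rfl | hxs <;> rcases mem_insert.1 hy with rfl | hys
      · exact absurd hxy (lt_irrefl _)
      · exact absurd hxy (hmax y hys).not_gt
      · have := (hbij'.mapsTo hxs).2
        omega
      · rw [hg' x hxs, hg' y hys]
        exact hmono x hxs y hys hxy

theorem Set.InjOn.add_of_lt_imp_lt {α : Type*} {s : Set α} {K g : α → ℕ} (hg : Set.InjOn g s)
    (hK : ∀ x ∈ s, ∀ y ∈ s, K x < K y → g x < g y) :
    Set.InjOn (fun x => K x + g x) s := by
  intro x hx y hy hxy
  by_contra hne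
  rcases (hg.ne hx hy hne).lt_or_gt with hlt | hlt
  · have := mt (hK y hy x hx) hlt.not_gt
    simp only at hxy
    omega
  · have := mt (hK x hx y hy) hlt.not_gt
    simp only at hxy
    omega

theorem Set.InjOn.union_of_lt {α β : Type*} [Preorder β] {f : α → β} {s t : Set α}
    (hs : Set.InjOn f s) (ht : Set.InjOn f t) (hlt : ∀ x ∈ s, ∀ y ∈ t, f x < f y) :
    Set.InjOn f (s ∪ t) :=
  (Set.injOn_union (Set.disjoint_left.2 fun x hxs hxt => (hlt x hxs x hxt).false)).2
    ⟨hs, ht, fun x hx y hy => (hlt x hx y hy).ne⟩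

theorem Set.BijOn.union_Icc {α : Type*} {f : α → ℕ} {s t : Set α} {k j : ℕ}
    (hs : Set.BijOn f s (Set.Icc 1 k)) (ht : Set.BijOn f t (Set.Icc (k + 1) (k + j))) :
    Set.BijOn f (s ∪ t) (Set.Icc 1 (k + j)) := by
  have hIcc : Set.Icc 1 k ∪ Set.Icc (k + 1) (k + j) = Set.Icc 1 (k + j) := by
    ext; simp only [Set.mem_union, Set.mem_Icc]; omega
  rw [← hIcc]
  exact hs.union ht (hs.injOn.union_of_lt ht.injOn fun x hx y hy =>
    (hs.mapsTo hx).2.trans_lt (ht.mapsTo hy).1)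

theorem Finset.exists_bijOn_Icc_mapsTo_of_subset {α : Type*} [DecidableEq α] {s t : Finset α}
    (hts : t ⊆ s) :
    ∃ h : α → ℕ, Set.BijOn h s (Set.Icc 1 #s) ∧ Set.MapsTo h t (Set.Icc 1 #t) := by
  obtain ⟨f, hf, -⟩ := exists_bijOn_Icc_of_lt_imp_lt (fun _ ↦ 0) t 0
  obtain ⟨g, hg, -⟩ := exists_bijOn_Icc_of_lt_imp_lt (fun _ ↦ 0) (s \ t) #t
  rw [zero_add, zero_add] at hf
  have hf' : Set.BijOn (t.piecewise f g) t (Set.Icc 1 #t) :=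
    hf.congr fun x hx => (t.piecewise_eq_of_mem f g hx).symm
  have hg' : Set.BijOn (t.piecewise f g) ↑(s \ t) (Set.Icc (#t + 1) (#t + #(s \ t))) :=
    hg.congr fun x hx => (t.piecewise_eq_of_notMem f g (mem_sdiff.1 hx).2).symm
  refine ⟨t.piecewise f g, ?_, hf'.mapsTo⟩
  have := hf'.union_Icc hg'
  rwa [← coe_union, union_sdiff_of_subset hts, add_comm, card_sdiff_add_card_eq_card hts] at this

namespace SimpleGraph

theorem two_mul_add_one_le_card_of_mul_card_le {V : Type*} [Fintype V] [Nonempty V]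
    (G : SimpleGraph V) [DecidableRel G.Adj] {c : ℕ}
    (h : c * Fintype.card V ≤ #G.edgeFinset) : 2 * c + 1 ≤ Fintype.card V := by
  have hchoose := h.trans G.card_edgeFinset_le_card_choose_two
  rw [Nat.choose_two_right, Nat.le_div_iff_mul_le two_pos, mul_right_comm, mul_comm] at hchoose
  have hpos : 0 < Fintype.card V := Fintype.card_pos
  have := Nat.le_of_mul_le_mul_left hchoose hpos
  omega

def starLabelling {V : Type*} [DecidableEq V] (r : V) (g : V → ℕ) (h : Sym2 V → ℕ)
    (e : Sym2 V) : ℕ :=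
  if hr : r ∈ e then g (Sym2.Mem.other' hr) else h e

section

variable {V : Type*} [DecidableEq V] {r : V} {g : V → ℕ} {h : Sym2 V → ℕ}

@[simp]
theorem starLabelling_mk_left (w : V) : starLabelling r g h s(r, w) = g w := by
  rw [starLabelling, dif_pos (Sym2.mem_mk_left r w)]
  exact congrArg g (Sym2.congr_right.1 (Sym2.other_spec' _))

theorem starLabelling_of_notMem {e : Sym2 V} (he : r ∉ e) : starLabelling r g h e = h e :=
  dif_neg he

end

variable {V : Type*} [Fintype V] [DecidableEq V] (G : SimpleGraph V) [DecidableRel G.Adj]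

theorem degree_le_degree_of_adj {r w : V} (hw : G.Adj r w)
    (hN : ∀ u, G.Adj w u → u = r ∨ G.Adj r u) : G.degree w ≤ G.degree r := by
  rw [← card_neighborFinset_eq_degree, ← card_neighborFinset_eq_degree]
  calc #(G.neighborFinset w) ≤ #((insert r (G.neighborFinset r)).erase w) := by
        refine card_le_card fun u hu => ?_
        rw [mem_neighborFinset] at hu
        rw [mem_erase, mem_insert, mem_neighborFinset]
        exact ⟨hu.ne', hN u hu⟩
    _ = #(G.neighborFinset r) := by
        rw [card_erase_of_mem (mem_insert_of_mem ((G.mem_neighborFinset r w).2 hw)),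
          card_insert_of_notMem (by simp)]
        rfl

theorem incidenceFinset_eq_image_neighborFinset (v : V) :
    G.incidenceFinset v = (G.neighborFinset v).image (s(v, ·)) := by
  ext e
  induction e using Sym2.ind with
  | _ x y =>
    simp only [mem_incidenceFinset, incidenceSet, Set.mem_ofPred_eq, mem_edgeSet, Sym2.mem_iff,
      mem_image, mem_neighborFinset, Sym2.eq_iff]
    constructor
    · rintro ⟨hxy, rfl | rfl⟩
      exacts [⟨y, hxy, .inl ⟨rfl, rfl⟩⟩, ⟨x, hxy.symm, .inr ⟨rfl, rfl⟩⟩]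
    · rintro ⟨u, hvu, ⟨rfl, rfl⟩ | ⟨rfl, rfl⟩⟩
      exacts [⟨hvu, .inl rfl⟩, ⟨hvu.symm, .inr rfl⟩]

def vertexSum (f : Sym2 V → ℕ) (v : V) : ℕ :=
  ∑ e ∈ G.incidenceFinset v, f e

theorem vertexSum_eq_sum_neighborFinset (f : Sym2 V → ℕ) (v : V) :
    G.vertexSum f v = ∑ u ∈ G.neighborFinset v, f s(v, u) := by
  rw [vertexSum, incidenceFinset_eq_image_neighborFinset,
    sum_image fun _ _ _ _ => Sym2.congr_right.1]

theorem vertexSum_eq_sum_ite_of_neighborFinset_subset (f : Sym2 V → ℕ) {v : V} {s : Finset V}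
    (hs : G.neighborFinset v ⊆ s) :
    G.vertexSum f v = ∑ u ∈ s, if G.Adj v u then f s(v, u) else 0 := by
  rw [vertexSum_eq_sum_neighborFinset, ← sum_filter]
  refine sum_congr (ext fun u => ?_) fun _ _ => rfl
  rw [mem_neighborFinset, mem_filter]
  exact ⟨fun hvu => ⟨hs ((G.mem_neighborFinset v u).2 hvu), hvu⟩, And.right⟩

theorem exists_bijOn_Icc_edgeSet_notMem {r : V} {t : Finset (Sym2 V)} (ht : ∀ e ∈ t, r ∉ e) :
    ∃ h : Sym2 V → ℕ,
      Set.BijOn h {e ∈ G.edgeSet | r ∉ e} (Set.Icc 1 (#G.edgeFinset - G.degree r)) ∧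
      Set.MapsTo h (G.edgeSet ∩ t) (Set.Icc 1 #t) := by
  have hsub : {e ∈ G.edgeFinset | e ∈ t} ⊆ {e ∈ G.edgeFinset | r ∉ e} := fun e he =>
    mem_filter.2 ⟨(mem_filter.1 he).1, ht e (mem_filter.1 he).2⟩
  obtain ⟨h, hh, hht⟩ := exists_bijOn_Icc_mapsTo_of_subset hsub
  have hcard : #{e ∈ G.edgeFinset | r ∉ e} = #G.edgeFinset - G.degree r := by
    rw [← card_incidenceFinset_eq_degree, incidenceFinset_eq_filter,
      ← card_filter_add_card_filter_not (s := G.edgeFinset) (p := (r ∈ ·))]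
    omega
  refine ⟨h, ?_, hht.mono (fun e he => ?_) (Set.Icc_subset_Icc_right (card_le_card ?_))⟩
  · rw [← hcard]
    convert hh using 1
    ext e
    simp
  · simpa using he
  · exact fun e he => (mem_filter.1 he).2

variable {G} {r : V} {g : V → ℕ} {h : Sym2 V → ℕ}

theorem bijOn_starLabelling {L : ℕ}
    (hg : Set.BijOn g (G.neighborSet r) (Set.Icc (L + 1) (L + G.degree r)))
    (hh : Set.BijOn h {e ∈ G.edgeSet | r ∉ e} (Set.Icc 1 L)) :
    Set.BijOn (starLabelling r g h) G.edgeSet (Set.Icc 1 (L + G.degree r)) := by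
  have hrest : Set.BijOn (starLabelling r g h) {e ∈ G.edgeSet | r ∉ e} (Set.Icc 1 L) :=
    hh.congr fun e he => (starLabelling_of_notMem he.2).symm
  have hstar : Set.BijOn (starLabelling r g h) (G.incidenceSet r)
      (Set.Icc (L + 1) (L + G.degree r)) := by
    rw [← coe_incidenceFinset, incidenceFinset_eq_image_neighborFinset, coe_image,
      coe_neighborFinset, ← Set.bijOn_comp_iff fun _ _ _ _ => Sym2.congr_right.1]
    exact hg.congr fun w _ => (starLabelling_mk_left w).symm
  have hsplit : {e ∈ G.edgeSet | r ∉ e} ∪ G.incidenceSet r = G.edgeSet := by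
    ext e; simp only [incidenceSet, Set.mem_union, Set.mem_sep_iff]; tauto
  exact hsplit ▸ hrest.union_Icc hstar

theorem vertexSum_starLabelling_self :
    G.vertexSum (starLabelling r g h) r = ∑ w ∈ G.neighborFinset r, g w := by
  simp [vertexSum_eq_sum_neighborFinset]

theorem vertexSum_starLabelling_of_adj {w : V} (hw : G.Adj r w) :
    G.vertexSum (starLabelling r g h) w =
      ∑ u ∈ (G.neighborFinset w).erase r, h s(w, u) + g w := by
  rw [vertexSum_eq_sum_neighborFinset, ← add_sum_erase _ _ ((G.mem_neighborFinset w r).2 hw.symm),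
    Sym2.eq_swap, starLabelling_mk_left, add_comm]
  refine congrArg (· + g w) (sum_congr rfl fun u hu => starLabelling_of_notMem ?_)
  simp only [Sym2.mem_iff, not_or]
  exact ⟨hw.ne, (ne_of_mem_erase hu).symm⟩

theorem vertexSum_starLabelling_lt_self {L : ℕ} {w : V} (hw : G.Adj r w)
    (hh : ∀ e ∈ G.edgeSet, r ∉ e → h e ≤ L) (hg : ∀ u ∈ G.neighborFinset r, L < g u)
    (hdeg : G.degree w ≤ G.degree r) (hr : 2 ≤ G.degree r) :
    G.vertexSum (starLabelling r g h) w < G.vertexSum (starLabelling r g h) r := by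
  have hw' : w ∈ G.neighborFinset r := (G.mem_neighborFinset r w).2 hw
  have hrest : ∑ u ∈ (G.neighborFinset w).erase r, h s(w, u) ≤ (G.degree r - 1) * L :=
    calc _ ≤ #((G.neighborFinset w).erase r) • L := by
          refine sum_le_card_nsmul _ _ _ fun u hu =>
            hh _ ((G.mem_neighborFinset w u).1 (mem_of_mem_erase hu)) ?_
          simp only [Sym2.mem_iff, not_or]
          exact ⟨hw.ne, (ne_of_mem_erase hu).symm⟩
      _ ≤ (G.degree r - 1) * L := by
          rw [smul_eq_mul, card_erase_of_mem ((G.mem_neighborFinset w r).2 hw.symm),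
            card_neighborFinset_eq_degree]
          exact Nat.mul_le_mul_right _ (Nat.sub_le_sub_right hdeg 1)
  have hstar : (G.degree r - 1) * (L + 1) ≤ ∑ u ∈ (G.neighborFinset r).erase w, g u := by
    have := card_nsmul_le_sum ((G.neighborFinset r).erase w) g (L + 1) fun u hu =>
      hg u (mem_of_mem_erase hu)
    rwa [card_erase_of_mem hw', card_neighborFinset_eq_degree, smul_eq_mul] at this
  have : (G.degree r - 1) * L < (G.degree r - 1) * (L + 1) :=
    Nat.mul_lt_mul_of_pos_left (lt_add_one L) (by omega)
  rw [vertexSum_starLabelling_of_adj hw, vertexSum_starLabelling_self, ← sum_erase_add _ _ hw']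
  omega

theorem exists_starLabelling {L : ℕ} (hh : Set.BijOn h {e ∈ G.edgeSet | r ∉ e} (Set.Icc 1 L))
    (hdeg : ∀ w ∈ G.neighborFinset r, G.degree w ≤ G.degree r) (hr : 2 ≤ G.degree r) :
    ∃ g : V → ℕ, Set.BijOn (starLabelling r g h) G.edgeSet (Set.Icc 1 (L + G.degree r)) ∧
      Set.InjOn (G.vertexSum (starLabelling r g h)) (insert r (G.neighborSet r)) ∧
      ∀ v ∈ insert r (G.neighborSet r), L < G.vertexSum (starLabelling r g h) v := by
  set N := G.neighborFinset r
  set K : V → ℕ := fun w => ∑ u ∈ (G.neighborFinset w).erase r, h s(w, u)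
  obtain ⟨g, hg, hmono⟩ := N.exists_bijOn_Icc_of_lt_imp_lt K L
  rw [card_neighborFinset_eq_degree] at hg
  have hσ : ∀ w ∈ N, G.vertexSum (starLabelling r g h) w = K w + g w := fun w hw =>
    vertexSum_starLabelling_of_adj ((G.mem_neighborFinset r w).1 hw)
  have hlt : ∀ w ∈ N,
      G.vertexSum (starLabelling r g h) w < G.vertexSum (starLabelling r g h) r := fun w hw =>
    vertexSum_starLabelling_lt_self ((G.mem_neighborFinset r w).1 hw)
      (fun e he hre => (hh.mapsTo ⟨he, hre⟩).2) (fun u hu => (hg.mapsTo hu).1) (hdeg w hw) hr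
  have hgt : ∀ w ∈ N, L < G.vertexSum (starLabelling r g h) w := fun w hw =>
    lt_of_lt_of_le (hg.mapsTo hw).1 ((hσ w hw).symm ▸ le_add_self)
  refine ⟨g, bijOn_starLabelling (by simpa [N] using hg) hh, ?_, ?_⟩ <;>
    rw [← coe_neighborFinset]
  · rw [Set.injOn_insert (by simp)]
    refine ⟨(hg.injOn.add_of_lt_imp_lt hmono).congr fun w hw => (hσ w hw).symm, ?_⟩
    rintro ⟨w, hw, hσw⟩
    exact (hlt w hw).ne hσw
  · rintro v (rfl | hv)
    · obtain ⟨w, hw⟩ : N.Nonempty := card_pos.1 (by rw [card_neighborFinset_eq_degree]; omega)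
      exact (hgt w hw).trans (hlt w hw)
    · exact hgt v hv

theorem injOn_vertexSum_and_le_five_of_path_or_triangle {a b c : V} {f : Sym2 V → ℕ}
    (hab : a ≠ b) (hac : a ≠ c) (hbc : b ≠ c)
    (hclosed : ∀ u v, G.Adj u v → u ∈ ({a, b, c} : Set V) → v ∈ ({a, b, c} : Set V))
    (hadjab : G.Adj a b) (hadjbc : G.Adj b c)
    (hf : Set.InjOn f (G.edgeSet ∩ {s(a, b), s(b, c), s(a, c)}))
    (hf3 : Set.MapsTo f (G.edgeSet ∩ {s(a, b), s(b, c), s(a, c)}) (Set.Icc 1 3)) :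
    Set.InjOn (G.vertexSum f) {a, b, c} ∧
      ∀ v ∈ ({a, b, c} : Set V), G.vertexSum f v ≤ 5 := by
  have hsum : ∀ v ∈ ({a, b, c} : Set V), G.vertexSum f v =
      ∑ u ∈ ({a, b, c} : Finset V), if G.Adj v u then f s(v, u) else 0 := by
    intro v hv
    refine G.vertexSum_eq_sum_ite_of_neighborFinset_subset f fun u hu => ?_
    simpa using hclosed v u ((G.mem_neighborFinset v u).1 hu) hv
  obtain ⟨hσa, hσb, hσc⟩ : _ ∧ _ ∧ _ :=
    ⟨hsum a (by simp), hsum b (by simp), hsum c (by simp)⟩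
  suffices G.vertexSum f a ≠ G.vertexSum f b ∧ G.vertexSum f a ≠ G.vertexSum f c ∧
      G.vertexSum f b ≠ G.vertexSum f c ∧
      G.vertexSum f a ≤ 5 ∧ G.vertexSum f b ≤ 5 ∧ G.vertexSum f c ≤ 5 by
    refine ⟨fun u hu v hv huv => ?_, fun v hv => ?_⟩
    · rcases hu with rfl | rfl | rfl <;> rcases hv with rfl | rfl | rfl <;> first | rfl | omega
    · rcases hv with rfl | rfl | rfl <;> omega
  have hab_bc : s(a, b) ≠ s(b, c) := by simp [hac, hbc]
  have heab : s(a, b) ∈ G.edgeSet ∩ {s(a, b), s(b, c), s(a, c)} := ⟨hadjab, by simp⟩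
  have hebc : s(b, c) ∈ G.edgeSet ∩ {s(a, b), s(b, c), s(a, c)} := ⟨hadjbc, by simp⟩
  have hxy := hf.ne heab hebc hab_bc
  have hx := hf3 heab
  have hy := hf3 hebc
  simp only [Set.mem_Icc] at hx hy
  simp only [mem_insert, mem_singleton, hab, hac, hbc, or_self, not_false_eq_true, sum_insert,
    sum_singleton, SimpleGraph.irrefl, hadjab, hadjbc, hadjab.symm, hadjbc.symm, Sym2.eq_swap,
    ↓reduceIte, zero_add, add_zero] at hσa hσb hσc
  by_cases hadjac : G.Adj a c
  · have heac : s(a, c) ∈ G.edgeSet ∩ {s(a, b), s(b, c), s(a, c)} := ⟨hadjac, by simp⟩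
    have hxz := hf.ne heab heac (by simp [hab.symm, hbc])
    have hyz := hf.ne hebc heac (by simp [hab.symm, hac.symm])
    have hz := hf3 heac
    simp only [Set.mem_Icc] at hz
    simp only [hadjac, hadjac.symm, ↓reduceIte] at hσa hσc
    omega
  · simp only [hadjac, mt G.adj_symm hadjac, ↓reduceIte, add_zero, zero_add] at hσa hσc
    omega

end SimpleGraph

/-- If a graph `G` on `n` vertices decomposes into a connected component on `3` vertices that is
either a `K₃` or a path `P₃`, together with a component containing a vertex `r` of degree
`n - 4` adjacent to every other vertex outside the small component, and `m ≥ 7n`, then `G` is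
antimagic. -/
theorem antimagic_of_triangle_or_path_component {V : Type*} [Fintype V] [DecidableEq V]
    (G : SimpleGraph V) [DecidableRel G.Adj] (a b c r : V)
    (hdist : a ≠ b ∧ a ≠ c ∧ b ≠ c ∧ r ≠ a ∧ r ≠ b ∧ r ≠ c)
    (hcomp : ∀ u v, G.Adj u v → (u ∈ ({a, b, c} : Set V) ↔ v ∈ ({a, b, c} : Set V)))
    (hsmall : (G.Adj a b ∧ G.Adj b c ∧ G.Adj a c) ∨ (G.Adj a b ∧ G.Adj b c ∧ ¬ G.Adj a c))
    (hr : G.degree r = Fintype.card V - 4)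
    (huniv : ∀ v, v ∉ ({a, b, c} : Set V) → v ≠ r → G.Adj r v)
    (hm : 7 * Fintype.card V ≤ G.edgeFinset.card) :
    G.IsAntimagic := by
  obtain ⟨hab, hac, hbc, hra, hrb, hrc⟩ := hdist
  obtain ⟨hadjab, hadjbc⟩ : G.Adj a b ∧ G.Adj b c := by
    rcases hsmall with ⟨hab', hbc', -⟩ | ⟨hab', hbc', -⟩ <;> exact ⟨hab', hbc'⟩
  have hNr : ∀ w, G.Adj r w ↔ w ∉ ({a, b, c} : Set V) ∧ w ≠ r := fun w =>
    ⟨fun hw => ⟨fun hwS => by simpa [hra, hrb, hrc] using (hcomp r w hw).2 hwS, hw.ne'⟩,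
      fun hw => huniv w hw.1 hw.2⟩
  have hdeg : ∀ w ∈ G.neighborFinset r, G.degree w ≤ G.degree r := fun w hw => by
    rw [SimpleGraph.mem_neighborFinset] at hw
    refine G.degree_le_degree_of_adj hw fun u hu => ?_
    have := (hcomp w u hu).not.1 ((hNr w).1 hw).1
    rw [hNr]
    tauto
  have : Nonempty V := ⟨a⟩
  have hn := G.two_mul_add_one_le_card_of_mul_card_le hm
  obtain ⟨h, hh, hhS⟩ := G.exists_bijOn_Icc_edgeSet_notMem (r := r)
    (t := {s(a, b), s(b, c), s(a, c)}) (by simp [hra, hrb, hrc])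
  obtain ⟨g, hbij, hinj, hgt⟩ := G.exists_starLabelling hh hdeg (by omega)
  simp only [coe_insert, coe_singleton] at hhS
  have hSr : G.edgeSet ∩ {s(a, b), s(b, c), s(a, c)} ⊆ {e ∈ G.edgeSet | r ∉ e} := by
    rintro e ⟨he, rfl | rfl | rfl⟩ <;> simp [he, hra, hrb, hrc]
  have heq : Set.EqOn h (SimpleGraph.starLabelling r g h)
      (G.edgeSet ∩ {s(a, b), s(b, c), s(a, c)}) := fun e he =>
    (SimpleGraph.starLabelling_of_notMem (hSr he).2).symm
  obtain ⟨hinjS, hle5⟩ := G.injOn_vertexSum_and_le_five_of_path_or_triangle hab hac hbc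
    (fun u v huv => (hcomp u v huv).1) hadjab hadjbc ((hh.injOn.mono hSr).congr heq)
    ((hhS.mono_right (Set.Icc_subset_Icc_right card_le_three)).congr heq)
  refine ⟨SimpleGraph.starLabelling r g h, ?_, ?_⟩
  · rw [SimpleGraph.coe_edgeFinset, coe_Icc]
    rwa [Nat.sub_add_cancel (by omega)] at hbij
  have hcover : ({a, b, c} : Set V) ∪ insert r (G.neighborSet r) = Set.univ :=
    Set.eq_univ_of_forall fun v => by
      simp only [Set.mem_union, Set.mem_insert_iff, SimpleGraph.mem_neighborSet, hNr]
      tauto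
  rw [← Set.injOn_univ, ← hcover]
  refine hinjS.union_of_lt hinj fun u hu v hv => (hle5 u hu).trans_lt ?_
  have := hgt v hv
  omega
end
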